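/- There exists an element α ∈ O_∞ that is not (−1)-approximable: no sequence of (−1)-approximations of α converges to α. In particular the bound −2 of the previous statement is optimal. (Sharpness assertion of Example 8.3 of the paper for the projective line with a degree-2 point at infinity.) -/

import Mathlib

open Filter Polynomial MeasureTheory IsDedekindDomain
open scoped Multiplicative

/-- The real absolute value attached to a `ℤₘ₀`-valued valuation with base `q`:
`Multiplicative.ofAdd n ↦ q ^ n` and `0 ↦ 0`. -/
noncomputable def zabs (q : ℕ) (x : WithZero (Multiplicative ℤ)) : ℝ :=
  if hx : x = 0 then 0 else (q : ℝ) ^ Multiplicative.toAdd (WithZero.unzero hx)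

variable (Fq : Type) [Field Fq] [Fintype Fq]

/-- The height-one prime `(π)` of `F_q[x]` attached to an irreducible polynomial `π`. -/
noncomputable def piPrime (π : Polynomial Fq) (hirr : Irreducible π) :
    HeightOneSpectrum (Polynomial Fq) where
  asIdeal := Ideal.span {π}
  isPrime := (Ideal.span_singleton_prime hirr.ne_zero).mpr hirr.prime
  ne_bot := by
    simp only [ne_eq, Ideal.span_singleton_eq_bot]
    exact hirr.ne_zero

/-- The completion `K_∞` of `K = F_q(x)` with respect to the `π`-adic valuation `ν`
(normalized by `ν π = 1`). -/
noncomputable abbrev Kinf (π : Polynomial Fq) (hirr : Irreducible π) : Type :=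
  (piPrime Fq π hirr).adicCompletion (RatFunc Fq)

/-- The absolute value `|h| = q ^ (-ν h)` on `K_∞`. -/
noncomputable def absKinf (q : ℕ) (π : Polynomial Fq) (hirr : Irreducible π)
    (h : Kinf Fq π hirr) : ℝ :=
  zabs q (Valued.v h)

/-- The inclusion `K = F_q(x) → K_∞`. -/
noncomputable def toKinf (π : Polynomial Fq) (hirr : Irreducible π) (r : RatFunc Fq) :
    Kinf Fq π hirr := r

/-- The ring `A` of rational functions regular away from the closed point defined by `π`:
the `F_q`-subalgebra of `F_q(x)` generated by `1/π`, `x/π` and `x²/π`. -/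
noncomputable def ringA (π : Polynomial Fq) : Subalgebra Fq (RatFunc Fq) :=
  Algebra.adjoin Fq
    {(algebraMap (Polynomial Fq) (RatFunc Fq) π)⁻¹,
      algebraMap (Polynomial Fq) (RatFunc Fq) X / algebraMap (Polynomial Fq) (RatFunc Fq) π,
      algebraMap (Polynomial Fq) (RatFunc Fq) (X ^ 2) / algebraMap (Polynomial Fq) (RatFunc Fq) π}

/-- `f/g` is an `M`-approximation of `α ∈ K_∞`: `f, g ∈ A`, `g ≠ 0`, `fA + gA = A` and
`|α - f/g| < q^(-M)/|g|²`. -/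
def IsApproxA (q : ℕ) (π : Polynomial Fq) (hirr : Irreducible π) (M : ℤ)
    (α : Kinf Fq π hirr) (f g : ringA Fq π) : Prop :=
  g ≠ 0 ∧ Ideal.span {f, g} = (⊤ : Ideal (ringA Fq π)) ∧
    absKinf Fq q π hirr
        (α - toKinf Fq π hirr (f : RatFunc Fq) / toKinf Fq π hirr (g : RatFunc Fq)) <
      (q : ℝ) ^ (-M) / absKinf Fq q π hirr (toKinf Fq π hirr (g : RatFunc Fq)) ^ 2

/-!
Take `α = x`. A nonzero element of `A`, or a nonzero `x g - f` with `f, g ∈ A`, can be written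
`H / π ^ m` with `deg H < 2 (m + 1)`; then `π ^ (m + 1) ∤ H`, so its absolute value is at least `1`.
A `(-1)`-approximation `f / g` satisfies `|x g - f| |g| < q`, which forces `|x g - f| = |g| = 1`
and hence `|x - f / g| = 1`. Here `x g ≠ f`: otherwise `g (x u + w) = 1` for some `u, w ∈ A`, so
`|g| = 1`, `g` is a constant, and `x = f / g` would lie in `A`. Thus no approximation comes within
`1` of `x`.
-/

section

open WithZero
open scoped NNReal

variable {F : Type} [Field F]

/-- Rational functions with poles only at `π` and at the usual infinite place, of order at most `k`
at the latter. -/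
def piPoleSpace (π : F[X]) (k : ℕ) : Set (RatFunc F) :=
  {h | ∃ (H : F[X]) (m : ℕ), H.natDegree ≤ π.natDegree * m + k ∧
    h = algebraMap F[X] (RatFunc F) H / algebraMap F[X] (RatFunc F) π ^ m}

variable {π : F[X]} {k l : ℕ} {a b : RatFunc F}

theorem piPoleSpace_mono (hkl : k ≤ l) : piPoleSpace π k ⊆ piPoleSpace π l := by
  rintro _ ⟨H, m, hH, rfl⟩
  exact ⟨H, m, by omega, rfl⟩

theorem algebraMap_mem_piPoleSpace (c : F) : algebraMap F (RatFunc F) c ∈ piPoleSpace π k :=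
  ⟨C c, 0, by simp, by simp [RatFunc.algebraMap_C]⟩

theorem X_mem_piPoleSpace_one : algebraMap F[X] (RatFunc F) X ∈ piPoleSpace π 1 :=
  ⟨X, 0, by simp, by simp⟩

theorem mul_mem_piPoleSpace (ha : a ∈ piPoleSpace π k) (hb : b ∈ piPoleSpace π l) :
    a * b ∈ piPoleSpace π (k + l) := by
  obtain ⟨A, m, hA, rfl⟩ := ha
  obtain ⟨B, n, hB, rfl⟩ := hb
  refine ⟨A * B, m + n, ?_, by rw [div_mul_div_comm, map_mul, pow_add]⟩
  have := natDegree_mul_le (p := A) (q := B)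
  nlinarith

theorem add_mem_piPoleSpace (hπ : π ≠ 0) (ha : a ∈ piPoleSpace π k) (hb : b ∈ piPoleSpace π k) :
    a + b ∈ piPoleSpace π k := by
  obtain ⟨A, m, hA, rfl⟩ := ha
  obtain ⟨B, n, hB, rfl⟩ := hb
  have hπK : algebraMap F[X] (RatFunc F) π ≠ 0 := by simpa using hπ
  refine ⟨A * π ^ n + B * π ^ m, m + n, ?_, ?_⟩
  · have hA' := (natDegree_mul_le (p := A) (q := π ^ n)).trans
      (add_le_add hA (natDegree_pow_le (p := π) (n := n)))
    have hB' := (natDegree_mul_le (p := B) (q := π ^ m)).trans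
      (add_le_add hB (natDegree_pow_le (p := π) (n := m)))
    refine (natDegree_add_le _ _).trans (max_le ?_ ?_) <;> linarith
  · rw [div_add_div _ _ (pow_ne_zero _ hπK) (pow_ne_zero _ hπK)]
    simp only [map_add, map_mul, map_pow, pow_add]
    ring

theorem ringA_subset_piPoleSpace (hdeg : π.natDegree = 2) :
    (ringA F π : Set (RatFunc F)) ⊆ piPoleSpace π 0 := by
  have hπ : π ≠ 0 := by rintro rfl; simp at hdeg
  intro h hh
  induction hh using Algebra.adjoin_induction with
  | mem x hx =>
    rcases hx with rfl | rfl | rfl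
    · exact ⟨1, 1, by simp, by simp⟩
    · exact ⟨X, 1, by simp [hdeg], by simp⟩
    · exact ⟨X ^ 2, 1, by simp [hdeg], by simp⟩
  | algebraMap c => exact algebraMap_mem_piPoleSpace c
  | add x y _ _ hx hy => exact add_mem_piPoleSpace hπ hx hy
  | mul x y _ _ hx hy => exact mul_mem_piPoleSpace hx hy

theorem X_notMem_piPoleSpace_zero (hπ : π ≠ 0) :
    algebraMap F[X] (RatFunc F) X ∉ piPoleSpace π 0 := by
  rintro ⟨H, m, hH, hX⟩
  have hπK : algebraMap F[X] (RatFunc F) π ≠ 0 := by simpa using hπ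
  rw [eq_div_iff (pow_ne_zero _ hπK), ← map_pow, ← map_mul] at hX
  have hdeg := congrArg natDegree (RatFunc.algebraMap_injective F hX)
  rw [natDegree_mul X_ne_zero (pow_ne_zero _ hπ), natDegree_X, natDegree_pow] at hdeg
  linarith

section Valuation

variable (hirr : Irreducible π)
include hirr

theorem valuation_piPrime_pi :
    (piPrime F π hirr).valuation (RatFunc F) (algebraMap F[X] (RatFunc F) π) = exp (-1) := by
  rw [HeightOneSpectrum.valuation_of_algebraMap]
  exact (piPrime F π hirr).intValuation_singleton hirr.ne_zero rfl

theorem intValuation_piPrime_le_exp_iff (H : F[X]) (n : ℕ) :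
    (piPrime F π hirr).intValuation H ≤ exp (-(n : ℤ)) ↔ π ^ n ∣ H := by
  rw [HeightOneSpectrum.intValuation_le_pow_iff_dvd]
  show Ideal.span {π} ^ n ∣ _ ↔ _
  rw [Ideal.span_singleton_pow, Ideal.span_singleton_dvd_span_singleton_iff_dvd]

theorem intValuation_piPrime_eq (H : F[X]) (m : ℕ) :
    (piPrime F π hirr).intValuation H = (piPrime F π hirr).valuation (RatFunc F)
      (algebraMap F[X] (RatFunc F) H / algebraMap F[X] (RatFunc F) π ^ m) * exp (-(m : ℤ)) := by
  have hπK : algebraMap F[X] (RatFunc F) π ≠ 0 := by simpa using hirr.ne_zero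
  have hexp : exp (-(m : ℤ)) = exp (-1) ^ m := by rw [← exp_nsmul, nsmul_eq_mul, mul_neg_one]
  rw [← HeightOneSpectrum.valuation_of_algebraMap (K := RatFunc F), hexp,
    ← valuation_piPrime_pi hirr, ← map_pow ((piPrime F π hirr).valuation (RatFunc F)), ← map_mul,
    div_mul_cancel₀ _ (pow_ne_zero _ hπK)]

theorem one_le_valuation_of_mem_piPoleSpace (hk : k < π.natDegree) (ha : a ∈ piPoleSpace π k)
    (ha0 : a ≠ 0) : 1 ≤ (piPrime F π hirr).valuation (RatFunc F) a := by
  obtain ⟨H, m, hH, rfl⟩ := ha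
  have hH0 : H ≠ 0 := by rintro rfl; simp at ha0
  by_contra! hlt
  have hle : (piPrime F π hirr).intValuation H ≤ exp (-((m + 1 : ℕ) : ℤ)) := by
    rw [← lt_mul_exp_iff_le exp_ne_zero, ← exp_add, intValuation_piPrime_eq hirr H m]
    calc _ < 1 * exp (-(m : ℤ)) := mul_lt_mul_of_pos_right hlt (zero_lt_iff.2 exp_ne_zero)
      _ = _ := by rw [one_mul]; congr 1; push_cast; ring
  have hdeg := natDegree_le_of_dvd ((intValuation_piPrime_le_exp_iff hirr H _).mp hle) hH0
  rw [natDegree_pow] at hdeg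
  nlinarith

theorem exists_eq_algebraMap_of_valuation_le_one (ha : a ∈ piPoleSpace π 0)
    (hv : (piPrime F π hirr).valuation (RatFunc F) a ≤ 1) : ∃ c : F, a = algebraMap F _ c := by
  obtain ⟨H, m, hH, rfl⟩ := ha
  have hle : (piPrime F π hirr).intValuation H ≤ exp (-(m : ℤ)) := by
    rw [intValuation_piPrime_eq hirr H m]
    exact mul_le_of_le_one_left' hv
  obtain ⟨H', rfl⟩ := (intValuation_piPrime_le_exp_iff hirr H m).mp hle
  have hπ : π ^ m ≠ 0 := pow_ne_zero _ hirr.ne_zero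
  have hH' : H'.natDegree = 0 := by
    rcases eq_or_ne H' 0 with rfl | hH'0
    · simp
    · rw [natDegree_mul hπ hH'0, natDegree_pow] at hH; linarith
  refine ⟨H'.coeff 0, ?_⟩
  have hπK : algebraMap F[X] (RatFunc F) π ≠ 0 := by simpa using hirr.ne_zero
  rw [IsScalarTower.algebraMap_apply F F[X] (RatFunc F), Polynomial.algebraMap_eq,
    ← eq_C_of_natDegree_eq_zero hH', map_mul, map_pow, mul_div_cancel_left₀ _ (pow_ne_zero _ hπK)]

end Valuation

section RingA

variable (hirr : Irreducible π) (hdeg : π.natDegree = 2)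
include hirr hdeg

theorem one_le_valuation_X_mul_add {u w : RatFunc F} (hu : u ∈ ringA F π) (hw : w ∈ ringA F π)
    (h0 : algebraMap F[X] (RatFunc F) X * u + w ≠ 0) :
    1 ≤ (piPrime F π hirr).valuation (RatFunc F) (algebraMap F[X] (RatFunc F) X * u + w) := by
  refine one_le_valuation_of_mem_piPoleSpace hirr (k := 1) (by omega) ?_ h0
  exact add_mem_piPoleSpace hirr.ne_zero
    (mul_mem_piPoleSpace X_mem_piPoleSpace_one (ringA_subset_piPoleSpace hdeg hu))
    (piPoleSpace_mono (Nat.zero_le 1) (ringA_subset_piPoleSpace hdeg hw))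

theorem one_le_valuation_of_mem_ringA {u : RatFunc F} (hu : u ∈ ringA F π) (h0 : u ≠ 0) :
    1 ≤ (piPrime F π hirr).valuation (RatFunc F) u :=
  one_le_valuation_of_mem_piPoleSpace hirr (k := 0) (by omega)
    (ringA_subset_piPoleSpace hdeg hu) h0

theorem coe_ne_X_mul_of_isCoprime {f g : ringA F π} (hfg : IsCoprime f g) :
    (f : RatFunc F) ≠ algebraMap F[X] (RatFunc F) X * g := by
  intro hf
  obtain ⟨u, w, huw⟩ := hfg
  have hunit : (g : RatFunc F) * (algebraMap F[X] (RatFunc F) X * u + w) = 1 := by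
    have := congrArg Subtype.val huw
    push_cast at this
    rw [← this, hf]
    ring
  have hg0 : (g : RatFunc F) ≠ 0 := left_ne_zero_of_mul_eq_one hunit
  have hvg : (piPrime F π hirr).valuation (RatFunc F) g = 1 := by
    refine ((mul_eq_one_iff_of_one_le (one_le_valuation_of_mem_ringA hirr hdeg g.2 hg0)
      (one_le_valuation_X_mul_add hirr hdeg u.2 w.2 (right_ne_zero_of_mul_eq_one hunit))).mp ?_).1
    rw [← map_mul, hunit, map_one]
  obtain ⟨c, hc⟩ := exists_eq_algebraMap_of_valuation_le_one hirr
    (ringA_subset_piPoleSpace hdeg g.2) hvg.le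
  have hc0 : c ≠ 0 := by rintro rfl; exact hg0 (by simpa using hc)
  apply X_notMem_piPoleSpace_zero hirr.ne_zero
  have hX : algebraMap F[X] (RatFunc F) X = f * algebraMap F (RatFunc F) c⁻¹ := by
    rw [hf, hc, mul_assoc, ← map_mul, mul_inv_cancel₀ hc0, map_one, mul_one]
  rw [hX]
  exact ringA_subset_piPoleSpace hdeg (mul_mem f.2 (algebraMap_mem _ _))

theorem valuation_X_mul_sub_eq_one {f g : ringA F π} (hfg : IsCoprime f g) (hg : g ≠ 0)
    (h : (piPrime F π hirr).valuation (RatFunc F) (algebraMap F[X] (RatFunc F) X * g - f) *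
      (piPrime F π hirr).valuation (RatFunc F) g ≤ 1) :
    (piPrime F π hirr).valuation (RatFunc F) (algebraMap F[X] (RatFunc F) X * g - f) = 1 ∧
      (piPrime F π hirr).valuation (RatFunc F) g = 1 := by
  have he :
      1 ≤ (piPrime F π hirr).valuation (RatFunc F) (algebraMap F[X] (RatFunc F) X * g - f) := by
    rw [sub_eq_add_neg]
    refine one_le_valuation_X_mul_add hirr hdeg g.2 (neg_mem f.2) ?_
    rw [← sub_eq_add_neg, sub_ne_zero]
    exact (coe_ne_X_mul_of_isCoprime hirr hdeg hfg).symm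
  have hg' := one_le_valuation_of_mem_ringA hirr hdeg g.2 (by exact_mod_cast hg)
  exact (mul_eq_one_iff_of_one_le he hg').mp (le_antisymm h (one_le_mul he hg'))

end RingA

theorem zabs_eq_toNNReal {q : ℕ} (hq : q ≠ 0) (x : ℤᵐ⁰) :
    zabs q x = WithZeroMulInt.toNNReal (e := q) (Nat.cast_ne_zero.2 hq) x := by
  rcases eq_or_ne x 0 with rfl | hx
  · simp [zabs]
  · rw [WithZeroMulInt.toNNReal_neg_apply _ hx, zabs, dif_neg hx]
    push_cast
    rfl

theorem toKinf_eq_algebraMap (hirr : Irreducible π) :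
    toKinf F π hirr = algebraMap (RatFunc F) (Kinf F π hirr) := rfl

theorem valued_toKinf (hirr : Irreducible π) (r : RatFunc F) :
    Valued.v (toKinf F π hirr r) = (piPrime F π hirr).valuation (RatFunc F) r :=
  HeightOneSpectrum.valuedAdicCompletion_eq_valuation' _ r

theorem valuation_mul_sq_lt_of_isApproxA {q : ℕ} (hq : 1 < q) (hirr : Irreducible π) {M : ℤ}
    {α : Kinf F π hirr} {f g : ringA F π} (h : IsApproxA F q π hirr M α f g) :
    Valued.v (α - toKinf F π hirr f / toKinf F π hirr g) * Valued.v (toKinf F π hirr g) ^ 2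
      < exp (-M) := by
  obtain ⟨hg, -, hlt⟩ := h
  have hq' : (1 : ℝ≥0) < q := by exact_mod_cast hq
  rw [← (WithZeroMulInt.toNNReal_strictMono hq').lt_iff_lt, ← NNReal.coe_lt_coe]
  have hvg : Valued.v (toKinf F π hirr g) ≠ 0 := by
    rw [valued_toKinf, Valuation.ne_zero_iff]
    exact_mod_cast hg
  simp only [absKinf, zabs_eq_toNNReal (zero_lt_one.trans hq).ne'] at hlt
  rw [lt_div_iff₀ (pow_pos (NNReal.coe_pos.2 (WithZeroMulInt.toNNReal_pos _ hvg)) 2)] at hlt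
  rw [map_mul, map_pow, WithZeroMulInt.toNNReal_neg_apply _ exp_ne_zero]
  push_cast
  exact hlt.trans_eq rfl

theorem valued_X_sub_div_eq_one_of_isApproxA {q : ℕ} (hq : 1 < q) (hirr : Irreducible π)
    (hdeg : π.natDegree = 2) {f g : ringA F π}
    (h : IsApproxA F q π hirr (-1) (toKinf F π hirr (algebraMap F[X] (RatFunc F) X)) f g) :
    Valued.v (toKinf F π hirr (algebraMap F[X] (RatFunc F) X) -
      toKinf F π hirr f / toKinf F π hirr g) = 1 := by
  have hlt := valuation_mul_sq_lt_of_isApproxA hq hirr h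
  obtain ⟨hg, hspan, -⟩ := h
  have hfg : IsCoprime f g := by
    rwa [← Ideal.sup_eq_top_iff_isCoprime, ← Ideal.span_insert]
  have hg' : toKinf F π hirr g ≠ 0 := by
    rw [toKinf_eq_algebraMap, _root_.map_ne_zero]
    exact_mod_cast hg
  have hmul : (toKinf F π hirr (algebraMap F[X] (RatFunc F) X) -
      toKinf F π hirr f / toKinf F π hirr g) * toKinf F π hirr g =
      toKinf F π hirr (algebraMap F[X] (RatFunc F) X * g - f) := by
    rw [toKinf_eq_algebraMap] at hg' ⊢
    rw [map_sub, map_mul, sub_mul, div_mul_cancel₀ _ hg']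
  have hv := congrArg Valued.v hmul
  simp only [map_mul, valued_toKinf] at hv hlt
  rw [neg_neg, pow_two, ← mul_assoc, hv, ← one_mul (exp 1), lt_mul_exp_iff_le one_ne_zero] at hlt
  obtain ⟨he, hg1⟩ := valuation_X_mul_sub_eq_one hirr hdeg hfg hg hlt
  rwa [hg1, mul_one, he] at hv

end

theorem exists_not_neg_one_approximable_degree_two (q : ℕ) (hq : Fintype.card Fq = q)
    (π : Polynomial Fq) (hirr : Irreducible π) (hdeg : π.natDegree = 2) :
    ∃ α : Kinf Fq π hirr, absKinf Fq q π hirr α ≤ 1 ∧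
      ¬ ∃ f g : ℕ → ringA Fq π,
        (∀ n, IsApproxA Fq q π hirr (-1) α (f n) (g n)) ∧
        Tendsto
          (fun n => toKinf Fq π hirr ((f n : RatFunc Fq)) / toKinf Fq π hirr ((g n : RatFunc Fq)))
          atTop (nhds α) := by
  have hq1 : 1 < q := hq ▸ Fintype.one_lt_card
  set α := toKinf Fq π hirr (algebraMap Fq[X] (RatFunc Fq) X)
  refine ⟨α, ?_, ?_⟩
  · rw [absKinf, zabs_eq_toNNReal (zero_lt_one.trans hq1).ne', NNReal.coe_le_one,
      WithZeroMulInt.toNNReal_le_one_iff (by exact_mod_cast hq1), valued_toKinf,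
      HeightOneSpectrum.valuation_of_algebraMap]
    exact HeightOneSpectrum.intValuation_le_one _ _
  · rintro ⟨f, g, happrox, hlim⟩
    have hball : {y | Valued.v (y - α) < 1} ∈ nhds α := Valued.mem_nhds.2 ⟨1, by simp⟩
    obtain ⟨n, hn⟩ := (hlim.eventually_mem hball).exists
    rw [Set.mem_ofPred_eq, Valuation.map_sub_swap,
      valued_X_sub_div_eq_one_of_isApproxA hq1 hirr hdeg (happrox n)] at hn
    exact lt_irrefl _ hn
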